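/- Let ε > 0 and let g, K : (−ε,ε) → Matₙ(ℝ) be smooth functions such that: g(u) is symmetric for all u and positive definite for all u ≠ 0; K(u)·g(u) = u²·1 (u² times the identity matrix) for all u ∈ (−ε,ε); and K'(0) = 0. Then: (i) K(0)·g(0) = g(0)·K(0) = 0; (ii) the kernel of K(0) equals the range of g(0) and the kernel of g(0) equals the range of K(0); and (iii) the symmetric matrix K(0) + g(0) is positive definite. -/

import Mathlib

open Matrix Set
open scoped Topology

attribute [local instance] Matrix.frobeniusNormedAddCommGroup Matrix.frobeniusNormedSpace

attribute [local instance] Matrix.frobeniusNormedRing Matrix.frobeniusNormedAlgebra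

private lemma aux_neBot {ε : ℝ} (hε : 0 < ε) :
    (𝓝[Set.Ioo (-ε) ε \ {0}] (0:ℝ)).NeBot := by
  have hS : Set.Ioo (-ε) ε ∈ 𝓝 (0:ℝ) :=
    isOpen_Ioo.mem_nhds ⟨by linarith, hε⟩
  have h1 : Set.Ioo (-ε) ε \ {0} = {(0:ℝ)}ᶜ ∩ Set.Ioo (-ε) ε := by
    rw [Set.diff_eq, Set.inter_comm]
  rw [h1, nhdsWithin_inter_of_mem' (mem_nhdsWithin_of_mem_nhds hS)]
  infer_instance

private lemma aux_lim {α : Type*} [TopologicalSpace α] [T2Space α] {ε : ℝ} (hε : 0 < ε)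
    {f : ℝ → α} {L : α} (hf : ContinuousOn f (Set.Ioo (-ε) ε))
    (hL : Filter.Tendsto f (𝓝[Set.Ioo (-ε) ε \ {0}] 0) (𝓝 L)) : f 0 = L := by
  haveI := aux_neBot hε
  exact tendsto_nhds_unique
    ((hf.continuousWithinAt ⟨by linarith, hε⟩).mono Set.diff_subset) hL

/-- Let `g, K` be smooth on `(−ε,ε)`, with `g u` symmetric for all `u` and
positive definite for `u ≠ 0`, `K u * g u = u² 1`, and `K'(0) = 0`.  Then
(i) `K 0 * g 0 = 0` and `g 0 * K 0 = 0`; (ii) `ker (K 0) = range (g 0)` and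
`ker (g 0) = range (K 0)`; (iii) `K 0 + g 0` is positive definite. -/
theorem rosen_removable_singularity_structure {n : ℕ} (ε : ℝ) (hε : 0 < ε)
    (g K : ℝ → Matrix (Fin n) (Fin n) ℝ)
    (hg : ContDiffOn ℝ (⊤ : ℕ∞) g (Set.Ioo (-ε) ε))
    (hK : ContDiffOn ℝ (⊤ : ℕ∞) K (Set.Ioo (-ε) ε))
    (hgsym : ∀ u ∈ Set.Ioo (-ε) ε, (g u)ᵀ = g u)
    (hgpos : ∀ u ∈ Set.Ioo (-ε) ε, u ≠ 0 → (g u).PosDef)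
    (hKg : ∀ u ∈ Set.Ioo (-ε) ε, K u * g u = u ^ 2 • (1 : Matrix (Fin n) (Fin n) ℝ))
    (hK'0 : deriv K 0 = 0) :
    (K 0 * g 0 = 0 ∧ g 0 * K 0 = 0) ∧
    (LinearMap.ker (K 0).mulVecLin = LinearMap.range (g 0).mulVecLin ∧
     LinearMap.ker (g 0).mulVecLin = LinearMap.range (K 0).mulVecLin) ∧
    (K 0 + g 0).PosDef := by
  classical
  set S : Set ℝ := Set.Ioo (-ε) ε with hSdef
  have hSopen : IsOpen S := isOpen_Ioo
  have h0S : (0:ℝ) ∈ S := ⟨by linarith, hε⟩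
  have hSnhds : S ∈ 𝓝 (0:ℝ) := hSopen.mem_nhds h0S
  haveI hNB := aux_neBot hε
  -- formula for K away from 0
  have hdet : ∀ u ∈ S, u ≠ 0 → IsUnit (g u).det := fun u hu hu0 =>
    (hgpos u hu hu0).det_pos.ne'.isUnit
  have hKform : ∀ u ∈ S, u ≠ 0 → K u = u ^ 2 • (g u)⁻¹ := by
    intro u hu hu0
    calc K u = K u * (g u * (g u)⁻¹) := by rw [Matrix.mul_nonsing_inv _ (hdet u hu hu0), mul_one]
      _ = (K u * g u) * (g u)⁻¹ := by rw [Matrix.mul_assoc]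
      _ = (u ^ 2 • (1 : Matrix (Fin n) (Fin n) ℝ)) * (g u)⁻¹ := by rw [hKg u hu]
      _ = u ^ 2 • (g u)⁻¹ := by rw [Matrix.smul_mul, Matrix.one_mul]
  have hgKu : ∀ u ∈ S, u ≠ 0 → g u * K u = u ^ 2 • (1 : Matrix (Fin n) (Fin n) ℝ) := by
    intro u hu hu0
    rw [hKform u hu hu0, Matrix.mul_smul, Matrix.mul_nonsing_inv _ (hdet u hu hu0)]
  have hKsymu : ∀ u ∈ S, u ≠ 0 → (K u)ᵀ = K u := by
    intro u hu hu0
    rw [hKform u hu hu0, Matrix.transpose_smul, Matrix.transpose_nonsing_inv, hgsym u hu]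
  -- continuity along the punctured filter
  have hKtends : Filter.Tendsto K (𝓝[S \ {0}] 0) (𝓝 (K 0)) :=
    (hK.continuousOn.continuousWithinAt h0S).mono Set.diff_subset
  -- symmetry of K 0
  have hTcont : Continuous (fun A : Matrix (Fin n) (Fin n) ℝ => Aᵀ) :=
    LinearMap.continuous_of_finiteDimensional
      ({ toFun := fun A : Matrix (Fin n) (Fin n) ℝ => Aᵀ
         map_add' := fun A B => Matrix.transpose_add A B
         map_smul' := fun c A => Matrix.transpose_smul c A } :
        Matrix (Fin n) (Fin n) ℝ →ₗ[ℝ] Matrix (Fin n) (Fin n) ℝ)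
  have hKsym0 : (K 0)ᵀ = K 0 := by
    refine aux_lim hε (hTcont.comp_continuousOn hK.continuousOn) ?_
    refine hKtends.congr' ?_
    filter_upwards [self_mem_nhdsWithin] with u hu
    exact (hKsymu u hu.1 (by simpa using hu.2)).symm
  -- (i)
  have hKg0 : K 0 * g 0 = 0 := by simpa using hKg 0 h0S
  have hgK0 : g 0 * K 0 = 0 := by
    refine aux_lim hε (hg.continuousOn.mul hK.continuousOn) ?_
    have h2 : Filter.Tendsto (fun u : ℝ => u ^ 2 • (1 : Matrix (Fin n) (Fin n) ℝ))
        (𝓝[S \ {0}] 0) (𝓝 0) := by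
      have : Filter.Tendsto (fun u : ℝ => u ^ 2 • (1 : Matrix (Fin n) (Fin n) ℝ))
          (𝓝 0) (𝓝 ((0:ℝ) ^ 2 • (1 : Matrix (Fin n) (Fin n) ℝ))) :=
        ((continuous_pow 2).smul continuous_const).tendsto 0
      simpa using this.mono_left nhdsWithin_le_nhds
    refine h2.congr' ?_
    filter_upwards [self_mem_nhdsWithin] with u hu
    exact (hgKu u hu.1 (by simpa using hu.2)).symm
  -- quadratic form continuity
  have quadcont : ∀ (x : Fin n → ℝ) (f : ℝ → Matrix (Fin n) (Fin n) ℝ), ContinuousOn f S →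
      ContinuousOn (fun u => x ⬝ᵥ (f u *ᵥ x)) S := by
    intro x f hf
    have hc : Continuous (fun A : Matrix (Fin n) (Fin n) ℝ => x ⬝ᵥ (A *ᵥ x)) :=
      LinearMap.continuous_of_finiteDimensional
        ({ toFun := fun A : Matrix (Fin n) (Fin n) ℝ => x ⬝ᵥ (A *ᵥ x)
           map_add' := by intro A B; simp [Matrix.add_mulVec, dotProduct_add]
           map_smul' := by intro c A; simp [Matrix.smul_mulVec, dotProduct_smul] } :
          Matrix (Fin n) (Fin n) ℝ →ₗ[ℝ] ℝ)
    exact hc.comp_continuousOn hf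
  -- nonnegativity of the limiting quadratic forms
  have hKq0 : ∀ x : Fin n → ℝ, 0 ≤ x ⬝ᵥ (K 0 *ᵥ x) := by
    intro x
    have htends : Filter.Tendsto (fun u => x ⬝ᵥ (K u *ᵥ x)) (𝓝[S \ {0}] 0)
        (𝓝 (x ⬝ᵥ (K 0 *ᵥ x))) :=
      ((quadcont x K hK.continuousOn).continuousWithinAt h0S).mono Set.diff_subset
    refine ge_of_tendsto htends ?_
    filter_upwards [self_mem_nhdsWithin] with u hu
    have hu0 : u ≠ 0 := by simpa using hu.2
    have hpsd := ((hgpos u hu.1 hu0).inv).posSemidef.dotProduct_mulVec_nonneg x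
    rw [hKform u hu.1 hu0, Matrix.smul_mulVec, dotProduct_smul, smul_eq_mul]
    exact mul_nonneg (sq_nonneg u) (by simpa using hpsd)
  have hgq0 : ∀ x : Fin n → ℝ, 0 ≤ x ⬝ᵥ (g 0 *ᵥ x) := by
    intro x
    have htends : Filter.Tendsto (fun u => x ⬝ᵥ (g u *ᵥ x)) (𝓝[S \ {0}] 0)
        (𝓝 (x ⬝ᵥ (g 0 *ᵥ x))) :=
      ((quadcont x g hg.continuousOn).continuousWithinAt h0S).mono Set.diff_subset
    refine ge_of_tendsto htends ?_
    filter_upwards [self_mem_nhdsWithin] with u hu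
    have := ((hgpos u hu.1 (by simpa using hu.2)).posSemidef).dotProduct_mulVec_nonneg x
    simpa using this
  have hKpsd : (K 0).PosSemidef := by
    refine PosSemidef.of_dotProduct_mulVec_nonneg ?_ (fun x => by simpa using hKq0 x)
    rw [Matrix.IsHermitian, conjTranspose_eq_transpose_of_trivial, hKsym0]
  have hgpsd : (g 0).PosSemidef := by
    refine PosSemidef.of_dotProduct_mulVec_nonneg ?_ (fun x => by simpa using hgq0 x)
    rw [Matrix.IsHermitian, conjTranspose_eq_transpose_of_trivial, hgsym 0 h0S]
  -- the second-derivative identity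
  have hKdAt : ∀ u ∈ S, DifferentiableAt ℝ K u := fun u hu =>
    (hK.contDiffAt (hSopen.mem_nhds hu)).differentiableAt (by simp)
  have hgdAt : ∀ u ∈ S, DifferentiableAt ℝ g u := fun u hu =>
    (hg.contDiffAt (hSopen.mem_nhds hu)).differentiableAt (by simp)
  have hK1 : ContDiffOn ℝ (⊤ : ℕ∞) (deriv K) S := hK.deriv_of_isOpen hSopen (by simp)
  have hg1 : ContDiffOn ℝ (⊤ : ℕ∞) (deriv g) S := hg.deriv_of_isOpen hSopen (by simp)
  have hK1At : DifferentiableAt ℝ (deriv K) 0 :=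
    (hK1.contDiffAt (hSopen.mem_nhds h0S)).differentiableAt (by simp)
  have hg1At : DifferentiableAt ℝ (deriv g) 0 :=
    (hg1.contDiffAt (hSopen.mem_nhds h0S)).differentiableAt (by simp)
  have e1 : deriv (fun u => K u * g u) =ᶠ[𝓝 (0:ℝ)]
      fun u => deriv K u * g u + K u * deriv g u := by
    filter_upwards [hSnhds] with u hu
    exact deriv_mul (hKdAt u hu) (hgdAt u hu)
  have e2 : (fun u => K u * g u) =ᶠ[𝓝 (0:ℝ)]
      fun u : ℝ => u ^ 2 • (1 : Matrix (Fin n) (Fin n) ℝ) := by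
    filter_upwards [hSnhds] with u hu using hKg u hu
  have lhs : deriv (deriv (fun u => K u * g u)) 0
      = deriv (deriv K) 0 * g 0 + K 0 * deriv (deriv g) 0 := by
    erw [Filter.EventuallyEq.deriv_eq e1,
      deriv_add (hK1At.mul (hgdAt 0 h0S)) ((hKdAt 0 h0S).mul hg1At),
      deriv_mul hK1At (hgdAt 0 h0S), deriv_mul (hKdAt 0 h0S) hg1At, hK'0]
    simp
    rfl
  have rhs : deriv (deriv (fun u : ℝ => u ^ 2 • (1 : Matrix (Fin n) (Fin n) ℝ))) 0
      = (2:ℝ) • (1 : Matrix (Fin n) (Fin n) ℝ) := by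
    have h1 : deriv (fun u : ℝ => u ^ 2 • (1 : Matrix (Fin n) (Fin n) ℝ))
        = fun u : ℝ => ((2:ℝ) * u) • (1 : Matrix (Fin n) (Fin n) ℝ) := by
      funext u
      erw [deriv_smul_const (differentiableAt_pow 2)]
      norm_num [deriv_pow]
    erw [h1, deriv_smul_const (differentiableAt_id.const_mul _)]
    have h2 : deriv (fun u : ℝ => 2 * u) 0 = 2 := by
      simpa using ((hasDerivAt_id (0:ℝ)).const_mul (2:ℝ)).deriv
    rw [show HMul.hMul (2:ℝ) = (fun u : ℝ => 2 * u) from rfl, h2]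
  have hmain : deriv (deriv K) 0 * g 0 + K 0 * deriv (deriv g) 0
      = (2:ℝ) • (1 : Matrix (Fin n) (Fin n) ℝ) := by
    erw [← lhs, Filter.EventuallyEq.deriv_eq e2.deriv, rhs]
  -- trivial common kernel
  have trivKer : ∀ x : Fin n → ℝ, K 0 *ᵥ x = 0 → g 0 *ᵥ x = 0 → x = 0 := by
    intro x hx1 hx2
    have h1 := congrArg (fun M => x ⬝ᵥ (M *ᵥ x)) hmain
    rw [Matrix.add_mulVec, dotProduct_add, ← Matrix.mulVec_mulVec, ← Matrix.mulVec_mulVec,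
      hx2, Matrix.mulVec_zero, dotProduct_zero, Matrix.smul_mulVec, Matrix.one_mulVec,
      dotProduct_smul, smul_eq_mul] at h1
    have h2 : x ⬝ᵥ (K 0 *ᵥ (deriv (deriv g) 0 *ᵥ x)) = 0 := by
      rw [dotProduct_mulVec, ← hKsym0, vecMul_transpose, hx1, zero_dotProduct]
    rw [h2, zero_add] at h1
    have h3 : x ⬝ᵥ x = 0 := by linarith
    exact dotProduct_self_eq_zero.mp h3
  -- (iii)
  have hsum : (K 0 + g 0).PosDef := by
    refine PosDef.of_dotProduct_mulVec_pos (hKpsd.1.add hgpsd.1) (fun x hx => ?_)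
    have ha := hKq0 x
    have hb := hgq0 x
    have hform : star x ⬝ᵥ ((K 0 + g 0) *ᵥ x)
        = x ⬝ᵥ (K 0 *ᵥ x) + x ⬝ᵥ (g 0 *ᵥ x) := by
      simp [Matrix.add_mulVec, dotProduct_add]
    rw [hform]
    rcases lt_or_eq_of_le (add_nonneg ha hb) with h | h
    · exact h
    · exfalso
      have hA : x ⬝ᵥ (K 0 *ᵥ x) = 0 := by linarith
      have hB : x ⬝ᵥ (g 0 *ᵥ x) = 0 := by linarith
      have hx1 : K 0 *ᵥ x = 0 := (hKpsd.dotProduct_mulVec_zero_iff x).mp (by simpa using hA)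
      have hx2 : g 0 *ᵥ x = 0 := (hgpsd.dotProduct_mulVec_zero_iff x).mp (by simpa using hB)
      exact hx (trivKer x hx1 hx2)
  -- (ii)
  have hPdet : IsUnit (K 0 + g 0).det := hsum.det_pos.ne'.isUnit
  have hPinv : ∀ x : Fin n → ℝ, (K 0 + g 0) *ᵥ ((K 0 + g 0)⁻¹ *ᵥ x) = x := by
    intro x
    rw [Matrix.mulVec_mulVec, Matrix.mul_nonsing_inv _ hPdet, Matrix.one_mulVec]
  have sqzero : ∀ (A : Matrix (Fin n) (Fin n) ℝ), Aᵀ = A →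
      ∀ y : Fin n → ℝ, A *ᵥ (A *ᵥ y) = 0 → A *ᵥ y = 0 := by
    intro A hA y hy
    have h1 : (A *ᵥ y) ⬝ᵥ (A *ᵥ y) = 0 := by
      rw [dotProduct_mulVec, ← hA, vecMul_transpose, hA, hy, zero_dotProduct]
    exact dotProduct_self_eq_zero.mp h1
  have hker1 : LinearMap.ker (K 0).mulVecLin = LinearMap.range (g 0).mulVecLin := by
    ext x
    simp only [LinearMap.mem_ker, LinearMap.mem_range, Matrix.mulVecLin_apply]
    constructor
    · intro hx
      set y := (K 0 + g 0)⁻¹ *ᵥ x with hy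
      have hxy : K 0 *ᵥ y + g 0 *ᵥ y = x := by
        rw [← Matrix.add_mulVec]; exact hPinv x
      have h1 : K 0 *ᵥ (K 0 *ᵥ y) + K 0 *ᵥ (g 0 *ᵥ y) = 0 := by
        rw [← Matrix.mulVec_add, hxy, hx]
      have h2 : K 0 *ᵥ (g 0 *ᵥ y) = 0 := by
        rw [Matrix.mulVec_mulVec, hKg0, Matrix.zero_mulVec]
      have h3 : K 0 *ᵥ (K 0 *ᵥ y) = 0 := by rwa [h2, add_zero] at h1
      have h4 : K 0 *ᵥ y = 0 := sqzero (K 0) hKsym0 y h3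
      exact ⟨y, by rw [← hxy, h4, zero_add]⟩
    · rintro ⟨y, rfl⟩
      rw [Matrix.mulVec_mulVec, hKg0, Matrix.zero_mulVec]
  have hker2 : LinearMap.ker (g 0).mulVecLin = LinearMap.range (K 0).mulVecLin := by
    ext x
    simp only [LinearMap.mem_ker, LinearMap.mem_range, Matrix.mulVecLin_apply]
    constructor
    · intro hx
      set y := (K 0 + g 0)⁻¹ *ᵥ x with hy
      have hxy : K 0 *ᵥ y + g 0 *ᵥ y = x := by
        rw [← Matrix.add_mulVec]; exact hPinv x
      have h1 : g 0 *ᵥ (K 0 *ᵥ y) + g 0 *ᵥ (g 0 *ᵥ y) = 0 := by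
        rw [← Matrix.mulVec_add, hxy, hx]
      have h2 : g 0 *ᵥ (K 0 *ᵥ y) = 0 := by
        rw [Matrix.mulVec_mulVec, hgK0, Matrix.zero_mulVec]
      have h3 : g 0 *ᵥ (g 0 *ᵥ y) = 0 := by rwa [h2, zero_add] at h1
      have h4 : g 0 *ᵥ y = 0 := sqzero (g 0) (hgsym 0 h0S) y h3
      exact ⟨y, by rw [← hxy, h4, add_zero]⟩
    · rintro ⟨y, rfl⟩
      rw [Matrix.mulVec_mulVec, hgK0, Matrix.zero_mulVec]
  exact ⟨⟨hKg0, hgK0⟩, ⟨hker1, hker2⟩, hsum⟩
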